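/- Let Z be a set containing distinct elements a, b, x, y, and let X = Z^ℕ be the set of infinite sequences (streams) with values in Z. For each z ∈ Z let ω_z : X → X be the prepend map ω_z(σ) = (z, σ₁, σ₂, …), and let σ_x and σ_y denote the constant streams with value x and y respectively. Suppose ≽* is a complete transitive relation on X that is coherent under each ω_z (σ ≽* τ implies ω_z(σ) ≽* ω_z(τ), and σ ≻* τ implies ω_z(σ) ≻* ω_z(τ), for every z ∈ Z), and suppose ω_a(σ_x) ≻* ω_b(σ_y) and ω_b(σ_x) ≻* ω_a(σ_y). Then σ_x ≻* σ_y. -/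
import Mathlib


/-- The strict part of a binary relation: `x ≻ y` iff `x ≽ y` and not `y ≽ x`. -/
def StrictRel {X : Type*} (R : X → X → Prop) (x y : X) : Prop := R x y ∧ ¬ R y x

/-- Prepending a prize `z` to a consumption stream: `ω_z(σ) = (z, σ₁, σ₂, …)`. -/
def prepend {Z : Type*} (z : Z) (σ : ℕ → Z) : ℕ → Z
  | 0 => z
  | n + 1 => σ n

/-- On `X = Z^ℕ`: if `≽*` is complete, transitive, coherent under every prepend map,
and `ω_a(σ_x) ≻* ω_b(σ_y)` and `ω_b(σ_x) ≻* ω_a(σ_y)`, then `σ_x ≻* σ_y`. -/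
theorem constant_streams_strictly_ranked {Z : Type*} (a b x y : Z)
    (hdist : List.Pairwise (· ≠ ·) [a, b, x, y])
    (R : (ℕ → Z) → (ℕ → Z) → Prop)
    (hcomp : ∀ σ τ, R σ τ ∨ R τ σ) (htrans : Transitive R)
    (hcoh : ∀ (z : Z) (σ τ : ℕ → Z),
      (R σ τ → R (prepend z σ) (prepend z τ)) ∧
      (StrictRel R σ τ → StrictRel R (prepend z σ) (prepend z τ)))
    (h1 : StrictRel R (prepend a fun _ => x) (prepend b fun _ => y))
    (h2 : StrictRel R (prepend b fun _ => x) (prepend a fun _ => y)) :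
    StrictRel R (fun _ => x) (fun _ => y) := by
  by_contra hns
  have hyx : R (fun _ => y) (fun _ => x) := by
    rcases hcomp (fun _ => x) (fun _ => y) with h | h
    · by_contra hn; exact hns ⟨h, hn⟩
    · exact h
  have ha : R (prepend a fun _ => y) (prepend a fun _ => x) :=
    (hcoh a _ _).1 hyx
  have hb : R (prepend b fun _ => y) (prepend b fun _ => x) :=
    (hcoh b _ _).1 hyx
  exact h2.2 (htrans ha (htrans h1.1 hb))
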